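/- Define the sequence (μ_n)_{n≥0} in ℝ³ by μ_0 = (1/3, 1/3, 1/3) and μ_{n+1} = F(μ_n), where F(a,b,c) = (c/2, a, b + c/2). Then for every n ≥ 0, μ_n lies in the probability simplex Δ and its third coordinate satisfies μ_n(C) ≥ 1/4; that is, the initial distribution (1/3,1/3,1/3) is H-safe for H = {μ ∈ Δ : μ(C) ≥ 1/4} under the strategy that always chooses action b. -/
import Mathlib


/-- The distribution transformer `F(a,b,c) = (c/2, a, b + c/2)` of the Markov chain on
states `{A,B,C}` where `A → B`, `B → C`, and `C → C` or `C → A` with probability `1/2` each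
(the running-example MDP with action `b` always chosen in state `A`). -/
noncomputable def F : ℝ × ℝ × ℝ → ℝ × ℝ × ℝ := fun p => (p.2.2 / 2, p.1, p.2.1 + p.2.2 / 2)

/-- The stream of distributions: `μ_0 = (1/3, 1/3, 1/3)`, `μ_{n+1} = F(μ_n)`. -/
noncomputable def mu : ℕ → ℝ × ℝ × ℝ
  | 0 => (1 / 3, 1 / 3, 1 / 3)
  | n + 1 => F (mu n)

/-- Every `μ_n` lies in the probability simplex and its third coordinate
is at least `1/4`; i.e.\ `(1/3,1/3,1/3)` is `H`-safe for `H = {μ ∈ Δ : μ(C) ≥ 1/4}` under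
the strategy that always chooses action `b`. -/
theorem mu_safe : ∀ n : ℕ,
    (0 ≤ (mu n).1 ∧ 0 ≤ (mu n).2.1 ∧ 0 ≤ (mu n).2.2 ∧
      (mu n).1 + (mu n).2.1 + (mu n).2.2 = 1) ∧
    1 / 4 ≤ (mu n).2.2 := by
  have key : ∀ n : ℕ,
      0 ≤ (mu n).1 ∧ 0 ≤ (mu n).2.1 ∧ 0 ≤ (mu n).2.2 ∧
      (mu n).1 + (mu n).2.1 + (mu n).2.2 = 1 ∧
      1 / 4 ≤ (mu n).2.2 ∧
      1 / 4 ≤ (mu n).2.1 + (mu n).2.2 / 2 ∧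
      1 / 4 ≤ (mu n).1 + (mu n).2.1 / 2 + (mu n).2.2 / 4 := by
    intro n
    induction n with
    | zero => norm_num [mu]
    | succ k ih =>
      obtain ⟨ha, hb, hc, hs, h1, h2, h3⟩ := ih
      simp only [mu, F]
      refine ⟨by linarith, ha, by linarith, by linarith, h2, by linarith, by linarith⟩
  intro n
  obtain ⟨ha, hb, hc, hs, h1, _, _⟩ := key n
  exact ⟨⟨ha, hb, hc, hs⟩, h1⟩
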